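/- Let 𝒳, 𝒴 be nonempty finite alphabets with |𝒴| ≥ 2, let η ∈ (0,1] and κ ∈ (0,2]. Let W and Ŵ be discrete memoryless channels from 𝒳 to 𝒴 such that d_TV(Ŵ(·|x), W(·|x)) ≤ κ for every x ∈ 𝒳. Then the pseudo-capacities satisfy |C_η(Ŵ) − C_η(W)| ≤ (κ/2)·log(2e|𝒴|/(η²κ)). -/
import Mathlib


/-- A probability distribution on a finite alphabet. -/
def IsDist {𝒴 : Type*} [Fintype 𝒴] (P : 𝒴 → ℝ) : Prop :=
  (∀ y, 0 ≤ P y) ∧ ∑ y, P y = 1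

/-- Total variation distance (unnormalized ℓ₁ distance, valued in [0,2]). -/
noncomputable def dTV {𝒴 : Type*} [Fintype 𝒴] (P Q : 𝒴 → ℝ) : ℝ :=
  ∑ y, |P y - Q y|

/-- Real-valued KL divergence formula (the convention `0 · log (0/q) = 0` is
automatic; all reference distributions used here are bounded below by `η > 0`). -/
noncomputable def klR {𝒴 : Type*} [Fintype 𝒴] (P Q : 𝒴 → ℝ) : ℝ :=
  ∑ y, P y * Real.log (P y / Q y)

/-- The pseudo-capacity `C_η(W) = min_{Q ∈ 𝒫_η(𝒴)} max_{x ∈ 𝒳} D(W(·|x) ‖ Q)`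
(the minimum is attained by compactness; we express it as an infimum). -/
noncomputable def pseudoCapR {𝒳 𝒴 : Type*} [Fintype 𝒳] [Nonempty 𝒳] [Fintype 𝒴]
    (η : ℝ) (W : 𝒳 → 𝒴 → ℝ) : ℝ :=
  sInf {c : ℝ | ∃ Q : 𝒴 → ℝ, (IsDist Q ∧ ∀ y, η ≤ Q y) ∧ c = ⨆ x : 𝒳, klR (W x) Q}

section Aux

variable {𝒴 : Type*} [Fintype 𝒴]

lemma isDist_le_one {P : 𝒴 → ℝ} (hP : IsDist P) (y : 𝒴) : P y ≤ 1 := by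
  calc P y ≤ ∑ z, P z := Finset.single_le_sum (fun z _ => hP.1 z) (Finset.mem_univ y)
  _ = 1 := hP.2

lemma term_eq (p q : ℝ) (hp : 0 ≤ p) (hq : 0 < q) :
    p * Real.log (p / q) = p * Real.log p - p * Real.log q := by
  rcases eq_or_lt_of_le hp with h | h
  · simp [← h]
  · rw [Real.log_div (ne_of_gt h) (ne_of_gt hq)]; ring

/-- One-sided bound: for `0 ≤ q ≤ p ≤ 1`, `p log p - q log q ≤ p - q`. -/
lemma ent_diff_le₁ {p q : ℝ} (hq0 : 0 ≤ q) (hqp : q ≤ p) (hp1 : p ≤ 1) :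
    p * Real.log p - q * Real.log q ≤ p - q := by
  rcases eq_or_lt_of_le hq0 with h | hq
  · have hp0 : 0 ≤ p := le_trans hq0 hqp
    have hlogp : Real.log p ≤ 0 := Real.log_nonpos hp0 hp1
    rw [← h]
    simp only [zero_mul, sub_zero]
    nlinarith [mul_nonpos_of_nonneg_of_nonpos hp0 hlogp]
  · have hp : 0 < p := lt_of_lt_of_le hq hqp
    have h1 : Real.log (p / q) ≤ p / q - 1 :=
      Real.log_le_sub_one_of_pos (div_pos hp hq)
    rw [Real.log_div (ne_of_gt hp) (ne_of_gt hq)] at h1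
    have h2 : Real.log p ≤ 0 := Real.log_nonpos (le_of_lt hp) hp1
    have h3 : q * (p / q) = p := by field_simp
    nlinarith [mul_le_mul_of_nonneg_left h1 (le_of_lt hq)]

/-- Superadditivity of `t log t`. -/
lemma superadd {p d : ℝ} (hp : 0 ≤ p) (hd : 0 ≤ d) :
    p * Real.log p + d * Real.log d ≤ (p + d) * Real.log (p + d) := by
  rcases eq_or_lt_of_le hp with h | hp'
  · simp [← h]
  · rcases eq_or_lt_of_le hd with h | hd'
    · simp [← h]
    · have h1 : Real.log p ≤ Real.log (p + d) := Real.log_le_log hp' (by linarith)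
      have h2 : Real.log d ≤ Real.log (p + d) := Real.log_le_log hd' (by linarith)
      nlinarith

/-- `-(d log d) ≤ -(d log c) + c - d` for `d ≥ 0`, `c > 0`. -/
lemma neg_ent_le {d c : ℝ} (hd : 0 ≤ d) (hc : 0 < c) :
    -(d * Real.log d) ≤ -(d * Real.log c) + c - d := by
  rcases eq_or_lt_of_le hd with h | hd'
  · simp [← h]; linarith
  · have h1 : Real.log (c / d) ≤ c / d - 1 :=
      Real.log_le_sub_one_of_pos (div_pos hc hd')
    rw [Real.log_div (ne_of_gt hc) (ne_of_gt hd')] at h1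
    have h3 : d * (c / d) = c := by field_simp
    nlinarith [mul_le_mul_of_nonneg_left h1 (le_of_lt hd')]

/-- Per-coordinate entropy-difference bound. -/
lemma per_term {p q c : ℝ} (hp0 : 0 ≤ p) (hp1 : p ≤ 1) (hq0 : 0 ≤ q) (hq1 : q ≤ 1)
    (hc : 0 < c) :
    p * Real.log p - q * Real.log q ≤
      max (p - q) 0 + (max (q - p) 0 * (-Real.log c) + c - max (q - p) 0) := by
  rcases le_total q p with h | h
  · rw [max_eq_left (by linarith), max_eq_right (by linarith)]
    have := ent_diff_le₁ hq0 h hp1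
    simp only [zero_mul, zero_add]
    linarith
  · rw [max_eq_right (by linarith : p - q ≤ 0), max_eq_left (by linarith)]
    have h3 : p * Real.log p + (q - p) * Real.log (q - p) ≤ q * Real.log q := by
      have := superadd hp0 (by linarith : (0:ℝ) ≤ q - p)
      have hpq : p + (q - p) = q := by ring
      rw [hpq] at this; exact this
    have h4 := neg_ent_le (by linarith : (0:ℝ) ≤ q - p) hc
    nlinarith

/-- The main pointwise continuity bound for `klR` against a fixed reference `Q`. -/
lemma kl_diff (h𝒴 : 2 ≤ Fintype.card 𝒴)
    {η κ : ℝ} (hη0 : 0 < η) (hη1 : η ≤ 1) (hκ0 : 0 < κ) (hκ2 : κ ≤ 2)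
    {P P' Q : 𝒴 → ℝ} (hP : IsDist P) (hP' : IsDist P') (hQ : IsDist Q)
    (hQη : ∀ y, η ≤ Q y) (hTV : dTV P P' ≤ κ) :
    klR P Q - klR P' Q ≤
      κ / 2 * Real.log (2 * Real.exp 1 * Fintype.card 𝒴 / (η ^ 2 * κ)) := by
  set N : ℝ := (Fintype.card 𝒴 : ℝ) with hNdef
  have hN : (2:ℝ) ≤ N := by rw [hNdef]; exact_mod_cast h𝒴
  have hQpos : ∀ y, 0 < Q y := fun y => lt_of_lt_of_le hη0 (hQη y)
  have hQ1 : ∀ y, Q y ≤ 1 := isDist_le_one hQ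
  have hkl : ∀ R : 𝒴 → ℝ, (∀ y, 0 ≤ R y) →
      klR R Q = ∑ y, R y * Real.log (R y) - ∑ y, R y * Real.log (Q y) := by
    intro R hR
    rw [klR, ← Finset.sum_sub_distrib]
    exact Finset.sum_congr rfl fun y _ => term_eq _ _ (hR y) (hQpos y)
  rw [hkl P hP.1, hkl P' hP'.1]
  set c : ℝ := κ / (2 * N) with hcdef
  have hc : 0 < c := div_pos hκ0 (by linarith)
  have hc1 : c ≤ 1 := by
    rw [div_le_one (by linarith : (0:ℝ) < 2 * N)]; linarith
  have hlogc : Real.log c ≤ 0 := Real.log_nonpos (le_of_lt hc) hc1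
  -- sums of positive/negative parts
  have hsum0 : ∑ y, (P y - P' y) = 0 := by
    rw [Finset.sum_sub_distrib, hP.2, hP'.2]; ring
  have habsum : ∀ y, max (P y - P' y) 0 + max (P' y - P y) 0 = |P y - P' y| := by
    intro y
    rcases le_total (P' y) (P y) with h | h
    · rw [max_eq_left (by linarith), max_eq_right (by linarith), abs_of_nonneg (by linarith)]
      ring
    · rw [max_eq_right (by linarith), max_eq_left (by linarith), abs_of_nonpos (by linarith)]
      ring
  have hdiffsum : ∀ y, max (P y - P' y) 0 - max (P' y - P y) 0 = P y - P' y := by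
    intro y
    have := max_zero_sub_max_neg_zero_eq_self (P y - P' y)
    simpa using this
  have hSeq : ∑ y, max (P y - P' y) 0 = ∑ y, max (P' y - P y) 0 := by
    have : ∑ y, (max (P y - P' y) 0 - max (P' y - P y) 0) = 0 := by
      rw [Finset.sum_congr rfl fun y _ => hdiffsum y]; exact hsum0
    rw [Finset.sum_sub_distrib] at this; linarith
  have hSbound : ∑ y, max (P' y - P y) 0 ≤ κ / 2 := by
    have h1 : ∑ y, (max (P y - P' y) 0 + max (P' y - P y) 0) = dTV P P' := by
      rw [dTV]; exact Finset.sum_congr rfl fun y _ => habsum y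
    rw [Finset.sum_add_distrib, hSeq] at h1
    linarith
  have hSnn : 0 ≤ ∑ y, max (P' y - P y) 0 :=
    Finset.sum_nonneg fun y _ => le_max_right _ _
  -- entropy part
  have hent : ∑ y, P y * Real.log (P y) - ∑ y, P' y * Real.log (P' y) ≤
      κ / 2 * (-Real.log c) + κ / 2 := by
    have hstep : ∀ y ∈ Finset.univ, P y * Real.log (P y) - P' y * Real.log (P' y) ≤
        max (P y - P' y) 0 + (max (P' y - P y) 0 * (-Real.log c) + c - max (P' y - P y) 0) :=
      fun y _ => per_term (hP.1 y) (isDist_le_one hP y) (hP'.1 y) (isDist_le_one hP' y) hc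
    have h2 := Finset.sum_le_sum hstep
    rw [← Finset.sum_sub_distrib]
    have hNc : ∑ _y : 𝒴, c = κ / 2 := by
      rw [Finset.sum_const, Finset.card_univ, nsmul_eq_mul, hcdef]
      rw [hNdef]
      field_simp
    have hexp : ∑ y, (max (P y - P' y) 0 +
        (max (P' y - P y) 0 * (-Real.log c) + c - max (P' y - P y) 0)) =
        ∑ y, max (P y - P' y) 0 + ((∑ y, max (P' y - P y) 0) * (-Real.log c) + κ / 2
          - ∑ y, max (P' y - P y) 0) := by
      rw [← hNc]
      rw [Finset.sum_add_distrib]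
      congr 1
      rw [Finset.sum_sub_distrib, Finset.sum_add_distrib, Finset.sum_mul]
    rw [hexp] at h2
    have hmul : (∑ y, max (P' y - P y) 0) * (-Real.log c) ≤ κ / 2 * (-Real.log c) :=
      mul_le_mul_of_nonneg_right hSbound (by linarith)
    rw [hSeq] at h2
    linarith
  -- cross part
  have hcross : |∑ y, (P y - P' y) * Real.log (Q y)| ≤ κ / 2 * (-Real.log η) := by
    set m : ℝ := Real.log η / 2 with hmdef
    have hre : ∑ y, (P y - P' y) * Real.log (Q y) =
        ∑ y, (P y - P' y) * (Real.log (Q y) - m) := by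
      have : ∑ y, (P y - P' y) * (Real.log (Q y) - m) =
          ∑ y, (P y - P' y) * Real.log (Q y) - (∑ y, (P y - P' y)) * m := by
        rw [Finset.sum_mul, ← Finset.sum_sub_distrib]
        exact Finset.sum_congr rfl fun y _ => by ring
      rw [this, hsum0]; ring
    rw [hre]
    calc |∑ y, (P y - P' y) * (Real.log (Q y) - m)|
        ≤ ∑ y, |(P y - P' y) * (Real.log (Q y) - m)| := Finset.abs_sum_le_sum_abs _ _
      _ ≤ ∑ y, |P y - P' y| * (-Real.log η / 2) := by
          apply Finset.sum_le_sum
          intro y _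
          rw [abs_mul]
          apply mul_le_mul_of_nonneg_left _ (abs_nonneg _)
          have h1 : Real.log η ≤ Real.log (Q y) := Real.log_le_log hη0 (hQη y)
          have h2 : Real.log (Q y) ≤ 0 := Real.log_nonpos (le_of_lt (hQpos y)) (hQ1 y)
          rw [abs_le]; constructor <;> [skip; skip] <;> rw [hmdef] <;> linarith
      _ = (∑ y, |P y - P' y|) * (-Real.log η / 2) := by rw [← Finset.sum_mul]
      _ ≤ κ * (-Real.log η / 2) := by
          apply mul_le_mul_of_nonneg_right hTV
          have : Real.log η ≤ 0 := Real.log_nonpos (le_of_lt hη0) hη1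
          linarith
      _ = κ / 2 * (-Real.log η) := by ring
  -- combine and log algebra
  have hlogη : Real.log η ≤ 0 := Real.log_nonpos (le_of_lt hη0) hη1
  have hη2κ : (0:ℝ) < η ^ 2 * κ := by positivity
  have hlogRHS : Real.log (2 * Real.exp 1 * N / (η ^ 2 * κ)) =
      Real.log 2 + 1 + Real.log N - 2 * Real.log η - Real.log κ := by
    rw [Real.log_div (by positivity) (ne_of_gt hη2κ),
        Real.log_mul (by positivity) (by positivity : (0:ℝ) < N).ne',
        Real.log_mul (by norm_num) (Real.exp_pos 1).ne',
        Real.log_mul (by positivity : (0:ℝ) < η ^ 2).ne' (ne_of_gt hκ0),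
        Real.log_exp, Real.log_pow]
    push_cast
    ring
  have hlogcval : Real.log c = Real.log κ - (Real.log 2 + Real.log N) := by
    rw [hcdef, Real.log_div (ne_of_gt hκ0) (by positivity : (0:ℝ) < 2 * N).ne',
        Real.log_mul (by norm_num) (by positivity : (0:ℝ) < N).ne']
  have habs := abs_le.mp hcross
  have hsplit : ∑ y, (P y - P' y) * Real.log (Q y) =
      ∑ y, P y * Real.log (Q y) - ∑ y, P' y * Real.log (Q y) := by
    rw [← Finset.sum_sub_distrib]
    exact Finset.sum_congr rfl fun y _ => by ring
  have key : κ / 2 * (-Real.log c) + κ / 2 + κ / 2 * (-Real.log η) ≤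
      κ / 2 * (Real.log 2 + 1 + Real.log N - 2 * Real.log η - Real.log κ) := by
    rw [hlogcval]
    have hk : 0 ≤ κ / 2 * (-Real.log η) := mul_nonneg (by linarith) (by linarith)
    nlinarith [hk]
  rw [hlogRHS]
  linarith [hent, habs.1, hsplit, key]

/-- Crude lower bound for `klR` with a reference distribution bounded by 1. -/
lemma klR_lb {P Q : 𝒴 → ℝ} (hP : IsDist P) (hQpos : ∀ y, 0 < Q y) (hQ1 : ∀ y, Q y ≤ 1) :
    -(Fintype.card 𝒴 : ℝ) ≤ klR P Q := by
  have hterm : ∀ y, (-1 : ℝ) ≤ P y * Real.log (P y / Q y) := by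
    intro y
    rcases eq_or_lt_of_le (hP.1 y) with h | h
    · simp [← h]
    · have hd : P y ≤ P y / Q y := by
        rw [le_div_iff₀ (hQpos y)]
        nlinarith [hQ1 y, hP.1 y]
      have hlog : Real.log (P y) ≤ Real.log (P y / Q y) := Real.log_le_log h hd
      have h2 : (-1:ℝ) ≤ P y * Real.log (P y) := by
        have h3 : Real.log (1 / P y) ≤ 1 / P y - 1 :=
          Real.log_le_sub_one_of_pos (by positivity)
        rw [Real.log_div one_ne_zero (ne_of_gt h), Real.log_one] at h3
        have h5 : P y * (1 / P y) = 1 := by field_simp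
        nlinarith [isDist_le_one hP y]
      nlinarith
  calc -(Fintype.card 𝒴 : ℝ) = ∑ _y : 𝒴, (-1 : ℝ) := by
        rw [Finset.sum_const, Finset.card_univ, nsmul_eq_mul]; ring
    _ ≤ ∑ y, P y * Real.log (P y / Q y) := Finset.sum_le_sum fun y _ => hterm y
    _ = klR P Q := rfl

end Aux

/-- `|C_η(Ŵ) − C_η(W)| ≤ (κ/2)·log(2e|𝒴|/(η²κ))` for channels with
per-input total-variation distance at most `κ`. -/
theorem stmt_5 {𝒳 𝒴 : Type*} [Fintype 𝒳] [Nonempty 𝒳] [Fintype 𝒴]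
    (h𝒴 : 2 ≤ Fintype.card 𝒴)
    (η κ : ℝ) (hη0 : 0 < η) (hη1 : η ≤ 1) (hκ0 : 0 < κ) (hκ2 : κ ≤ 2)
    (W What : 𝒳 → 𝒴 → ℝ) (hW : ∀ x, IsDist (W x)) (hWhat : ∀ x, IsDist (What x))
    (hTV : ∀ x, dTV (What x) (W x) ≤ κ) :
    |pseudoCapR η What - pseudoCapR η W| ≤
      κ / 2 * Real.log (2 * Real.exp 1 * Fintype.card 𝒴 / (η ^ 2 * κ)) := by
  set B : ℝ := κ / 2 * Real.log (2 * Real.exp 1 * Fintype.card 𝒴 / (η ^ 2 * κ)) with hBdef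
  have hN : (2:ℝ) ≤ (Fintype.card 𝒴 : ℝ) := by exact_mod_cast h𝒴
  have hexp2 : (2:ℝ) ≤ Real.exp 1 := by
    have := Real.add_one_le_exp 1; linarith
  have hB0 : 0 ≤ B := by
    apply mul_nonneg (by linarith)
    apply Real.log_nonneg
    rw [le_div_iff₀ (by positivity)]
    nlinarith [sq_nonneg η, hη1, hη0.le]
  by_cases hex : ∃ Q : 𝒴 → ℝ, IsDist Q ∧ ∀ y, η ≤ Q y
  · obtain ⟨Q₀, hQ₀, hQ₀η⟩ := hex
    -- abbreviations
    set SW : Set ℝ := {c : ℝ | ∃ Q : 𝒴 → ℝ, (IsDist Q ∧ ∀ y, η ≤ Q y) ∧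
      c = ⨆ x : 𝒳, klR (W x) Q} with hSW
    set SWh : Set ℝ := {c : ℝ | ∃ Q : 𝒴 → ℝ, (IsDist Q ∧ ∀ y, η ≤ Q y) ∧
      c = ⨆ x : 𝒳, klR (What x) Q} with hSWh
    have hTV' : ∀ x, dTV (W x) (What x) ≤ κ := by
      intro x
      have : dTV (W x) (What x) = dTV (What x) (W x) := by
        rw [dTV, dTV]
        exact Finset.sum_congr rfl fun y _ => abs_sub_comm _ _
      rw [this]; exact hTV x
    -- generic facts for a channel V with IsDist hypothesis
    have hbddW : ∀ (V : 𝒳 → 𝒴 → ℝ), (∀ x, IsDist (V x)) →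
        BddBelow {c : ℝ | ∃ Q : 𝒴 → ℝ, (IsDist Q ∧ ∀ y, η ≤ Q y) ∧
          c = ⨆ x : 𝒳, klR (V x) Q} := by
      intro V hV
      refine ⟨-(Fintype.card 𝒴 : ℝ), ?_⟩
      rintro c ⟨Q, ⟨hQ, hQη⟩, rfl⟩
      obtain ⟨x₀⟩ := (inferInstance : Nonempty 𝒳)
      have hQpos : ∀ y, 0 < Q y := fun y => lt_of_lt_of_le hη0 (hQη y)
      have h1 : klR (V x₀) Q ≤ ⨆ x : 𝒳, klR (V x) Q :=
        le_ciSup (f := fun x : 𝒳 => klR (V x) Q)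
          (Set.Finite.bddAbove (Set.finite_range _)) x₀
      have h2 := klR_lb (hV x₀) hQpos (isDist_le_one hQ)
      linarith
    have hne : ∀ (V : 𝒳 → 𝒴 → ℝ),
        ({c : ℝ | ∃ Q : 𝒴 → ℝ, (IsDist Q ∧ ∀ y, η ≤ Q y) ∧
          c = ⨆ x : 𝒳, klR (V x) Q} : Set ℝ).Nonempty :=
      fun V => ⟨_, Q₀, ⟨hQ₀, hQ₀η⟩, rfl⟩
    -- key sup comparison
    have hsup : ∀ (V V' : 𝒳 → 𝒴 → ℝ), (∀ x, IsDist (V x)) → (∀ x, IsDist (V' x)) →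
        (∀ x, dTV (V x) (V' x) ≤ κ) →
        ∀ Q : 𝒴 → ℝ, IsDist Q → (∀ y, η ≤ Q y) →
        (⨆ x : 𝒳, klR (V x) Q) ≤ (⨆ x : 𝒳, klR (V' x) Q) + B := by
      intro V V' hV hV' hVV Q hQ hQη
      apply ciSup_le
      intro x
      have h1 := kl_diff h𝒴 hη0 hη1 hκ0 hκ2 (hV x) (hV' x) hQ hQη (hVV x)
      have h2 : klR (V' x) Q ≤ ⨆ x : 𝒳, klR (V' x) Q :=
        le_ciSup (f := fun x : 𝒳 => klR (V' x) Q)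
          (Set.Finite.bddAbove (Set.finite_range _)) x
      rw [← hBdef] at h1
      linarith
    -- two directions
    have hd1 : pseudoCapR η What ≤ pseudoCapR η W + B := by
      rw [pseudoCapR, pseudoCapR]
      have : sInf SWh - B ≤ sInf SW := by
        apply le_csInf (hne W)
        rintro c ⟨Q, ⟨hQ, hQη⟩, rfl⟩
        have h1 : sInf SWh ≤ ⨆ x : 𝒳, klR (What x) Q :=
          csInf_le (hbddW What hWhat) ⟨Q, ⟨hQ, hQη⟩, rfl⟩
        have h2 := hsup What W hWhat hW hTV Q hQ hQη
        linarith
      rw [hSW, hSWh] at this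
      linarith
    have hd2 : pseudoCapR η W ≤ pseudoCapR η What + B := by
      rw [pseudoCapR, pseudoCapR]
      have : sInf SW - B ≤ sInf SWh := by
        apply le_csInf (hne What)
        rintro c ⟨Q, ⟨hQ, hQη⟩, rfl⟩
        have h1 : sInf SW ≤ ⨆ x : 𝒳, klR (W x) Q :=
          csInf_le (hbddW W hW) ⟨Q, ⟨hQ, hQη⟩, rfl⟩
        have h2 := hsup W What hW hWhat hTV' Q hQ hQη
        linarith
      rw [hSW, hSWh] at this
      linarith
    rw [abs_le]
    constructor <;> linarith
  · have hempty : ∀ (V : 𝒳 → 𝒴 → ℝ),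
        ({c : ℝ | ∃ Q : 𝒴 → ℝ, (IsDist Q ∧ ∀ y, η ≤ Q y) ∧
          c = ⨆ x : 𝒳, klR (V x) Q} : Set ℝ) = ∅ := by
      intro V
      ext c
      simp only [Set.mem_setOf_eq, Set.mem_empty_iff_false, iff_false]
      rintro ⟨Q, ⟨hQ, hQη⟩, _⟩
      exact hex ⟨Q, hQ, hQη⟩
    rw [pseudoCapR, pseudoCapR, hempty W, hempty What, Real.sInf_empty]
    simpa using hB0
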